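/- Let $d\ge 1$ and $D\ge d+1$ be integers with $D-d$ odd, and set $\beta_i = (d-i+1)(2d-2i+1)$ for $1\le i\le d$ ($\beta_i=0$ otherwise) and $\gamma_i = (i+1)(2i+3)$ for $0\le i\le d-1$ ($\gamma_i=0$ otherwise). Let $r=(D-d+1)/2$, and for integer $j$ let $e_j^- = (4j-1-2D)/(6-8j+4D)$, $e_j^+ = (4j-5-2D)/(6-8j+4D)$, $f_j = -(4j-5)(4j-1)+(16j-12)D-4D^2$. Then for all $1\le i\le d$, with $j=r+i$: $e_j^-\,\gamma_{i-2}\beta_{i-1} + \gamma_{i-1}\beta_i + e_j^+\,\gamma_i\beta_{i+1} = f_j$ (whenever $6-8j+4D \ne 0$). -/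

import Mathlib

/-!
Write `D = 2r + d - 1` and `j = r + i`. The truncated products `γ_{k-1} β_k` agree with the
polynomial `k(2k+1)(d-k+1)(2d-2k+1)` on the whole range `0 ≤ k ≤ d+1`, because that polynomial
vanishes at both ends `k = 0` and `k = d+1`. The three-term sum is therefore, for every
`1 ≤ i ≤ d`, one rational function of `i`, `r`, `d`, and clearing the denominator
`6 - 8j + 4D = 2(2d - 4i + 1)` leaves a polynomial identity.
-/

noncomputable section

def halvedCubeBeta (d i : ℤ) : ℝ :=
  if 1 ≤ i ∧ i ≤ d then ((d : ℝ) - i + 1) * (2 * d - 2 * i + 1) else 0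

def halvedCubeGamma (d i : ℤ) : ℝ :=
  if 0 ≤ i ∧ i ≤ d - 1 then ((i : ℝ) + 1) * (2 * i + 3) else 0

theorem halvedCubeGamma_mul_halvedCubeBeta {d k : ℤ} (hk₀ : 0 ≤ k) (hk₁ : k ≤ d + 1) :
    halvedCubeGamma d (k - 1) * halvedCubeBeta d k
      = (k : ℝ) * (2 * k + 1) * ((d - k + 1) * (2 * d - 2 * k + 1)) := by
  unfold halvedCubeGamma halvedCubeBeta
  rcases hk₀.eq_or_lt with rfl | hk₀
  · simp
  rcases hk₁.eq_or_lt with rfl | hk₁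
  · rw [if_neg (by omega)]
    push_cast
    ring
  rw [if_pos (by omega), if_pos (by omega)]
  push_cast
  ring

theorem halvedCube_three_term_identity (D d i j : ℝ) (hD : D = 2 * (j - i) + d - 1)
    (hden : 6 - 8 * j + 4 * D ≠ 0) :
    (4 * j - 1 - 2 * D) / (6 - 8 * j + 4 * D) *
        ((i - 1) * (2 * (i - 1) + 1) * ((d - (i - 1) + 1) * (2 * d - 2 * (i - 1) + 1)))
      + i * (2 * i + 1) * ((d - i + 1) * (2 * d - 2 * i + 1))
      + (4 * j - 5 - 2 * D) / (6 - 8 * j + 4 * D) *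
        ((i + 1) * (2 * (i + 1) + 1) * ((d - (i + 1) + 1) * (2 * d - 2 * (i + 1) + 1)))
      = -(4 * j - 5) * (4 * j - 1) + (16 * j - 12) * D - 4 * D ^ 2 := by
  rw [div_mul_eq_mul_div, div_mul_eq_mul_div, add_right_comm, ← add_div, div_add' _ _ _ hden,
    div_eq_iff hden]
  subst hD
  ring

end

theorem stmt_12_general (D d r : ℤ) (hr : 2 * r = D - d + 1)
    (β γ : ℤ → ℝ) (em ep f : ℤ → ℝ)
    (hβ : ∀ i : ℤ, β i = if 1 ≤ i ∧ i ≤ d then ((d : ℝ) - i + 1) * (2 * d - 2 * i + 1) else 0)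
    (hγ : ∀ i : ℤ, γ i = if 0 ≤ i ∧ i ≤ d - 1 then ((i : ℝ) + 1) * (2 * i + 3) else 0)
    (hem : ∀ j : ℤ, em j = (4 * (j : ℝ) - 1 - 2 * D) / (6 - 8 * j + 4 * D))
    (hep : ∀ j : ℤ, ep j = (4 * (j : ℝ) - 5 - 2 * D) / (6 - 8 * j + 4 * D))
    (hf : ∀ j : ℤ, f j = -(4 * (j : ℝ) - 5) * (4 * j - 1) + (16 * j - 12) * D - 4 * D ^ 2)
    (hden : ∀ i : ℤ, 1 ≤ i → i ≤ d → (6 - 8 * ((r : ℝ) + i) + 4 * D) ≠ 0) :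
    ∀ i : ℤ, 1 ≤ i → i ≤ d →
      em (r + i) * γ (i - 2) * β (i - 1) + γ (i - 1) * β i + ep (r + i) * γ i * β (i + 1)
        = f (r + i) := by
  obtain rfl : β = halvedCubeBeta d := funext hβ
  obtain rfl : γ = halvedCubeGamma d := funext hγ
  intro i hi₁ hi₂
  have hD : (D : ℝ) = 2 * ((r : ℝ) + i - i) + d - 1 := by
    have : ((2 * r : ℤ) : ℝ) = ((D - d + 1 : ℤ) : ℝ) := congrArg _ hr
    push_cast at this
    linarith
  have hlow := halvedCubeGamma_mul_halvedCubeBeta (d := d) (k := i - 1) (by omega) (by omega)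
  have hmid := halvedCubeGamma_mul_halvedCubeBeta (d := d) (k := i) (by omega) (by omega)
  have hhigh := halvedCubeGamma_mul_halvedCubeBeta (d := d) (k := i + 1) (by omega) (by omega)
  rw [show i - 1 - 1 = i - 2 by ring] at hlow
  rw [show i + 1 - 1 = i by ring] at hhigh
  rw [hem, hep, hf, mul_assoc, mul_assoc, hlow, hmid, hhigh]
  push_cast
  exact halvedCube_three_term_identity _ _ _ _ hD (hden i hi₁ hi₂)

/-- halved cube uniform identity, case `D - d` odd. With
`β_i = (d-i+1)(2d-2i+1)` for `1 ≤ i ≤ d` (else `0`), `γ_i = (i+1)(2i+3)` for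
`0 ≤ i ≤ d-1` (else `0`), endpoint `r = (D-d+1)/2`, and
`e_j^- = (4j-1-2D)/(6-8j+4D)`, `e_j^+ = (4j-5-2D)/(6-8j+4D)`,
`f_j = -(4j-5)(4j-1) + (16j-12)D - 4D^2`: for all `1 ≤ i ≤ d`, with `j = r+i`
(assuming the denominator `6-8j+4D` is nonzero),
`e_j^- γ_{i-2} β_{i-1} + γ_{i-1} β_i + e_j^+ γ_i β_{i+1} = f_j`. -/
theorem stmt_12 (D d r : ℤ) (hd : 1 ≤ d) (hDd : d + 1 ≤ D) (hr : 2 * r = D - d + 1)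
    (β γ : ℤ → ℝ) (em ep f : ℤ → ℝ)
    (hβ : ∀ i : ℤ, β i = if 1 ≤ i ∧ i ≤ d then ((d : ℝ) - i + 1) * (2 * d - 2 * i + 1) else 0)
    (hγ : ∀ i : ℤ, γ i = if 0 ≤ i ∧ i ≤ d - 1 then ((i : ℝ) + 1) * (2 * i + 3) else 0)
    (hem : ∀ j : ℤ, em j = (4 * (j : ℝ) - 1 - 2 * D) / (6 - 8 * j + 4 * D))
    (hep : ∀ j : ℤ, ep j = (4 * (j : ℝ) - 5 - 2 * D) / (6 - 8 * j + 4 * D))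
    (hf : ∀ j : ℤ, f j = -(4 * (j : ℝ) - 5) * (4 * j - 1) + (16 * j - 12) * D - 4 * D ^ 2)
    (hden : ∀ i : ℤ, 1 ≤ i → i ≤ d → (6 - 8 * ((r : ℝ) + i) + 4 * D) ≠ 0) :
    ∀ i : ℤ, 1 ≤ i → i ≤ d →
      em (r + i) * γ (i - 2) * β (i - 1) + γ (i - 1) * β i + ep (r + i) * γ i * β (i + 1)
        = f (r + i) :=
  stmt_12_general D d r hr β γ em ep f hβ hγ hem hep hf hden
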